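/- arXiv:1704.04923 — 2 statements merged into one kernel-verified Lean document; each statement's English description precedes it below -/
import Mathlib

section
/- Let l₁, l₂, l₃, l₄ be four lines in the Euclidean plane in general position (no two parallel, no three concurrent), and let l be their Gauss line. For each i ∈ {1,2,3,4}, assume the four lines obtained from l₁, l₂, l₃, l₄ by replacing l_i with l are again in general position, and let g_i be their Gauss line. Then the five lines l, g₁, g₂, g₃, g₄ all pass through one common point. -/
open EuclideanGeometry RealInnerProductSpace AffineSubspace

noncomputable section

/-- The Euclidean plane. -/
abbrev Pt : Type := EuclideanSpace ℝ (Fin 2)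

/-- The incenter of a triangle `A B C`, given by the standard barycentric formula
with weights the lengths of the opposite sides. -/
def triIncenter (A B C : Pt) : Pt :=
  (dist B C + dist C A + dist A B)⁻¹ •
    (dist B C • A + dist C A • B + dist A B • C)

/-- The inradius of a triangle `A B C`: the distance from the incenter to the
side line `BC`. -/
def triInradius (A B C : Pt) : ℝ :=
  Metric.infDist (triIncenter A B C) (line[ℝ, B, C] : Set Pt)

/-- The centroid of a triangle. -/
def centroid3 (A B C : Pt) : Pt := (3 : ℝ)⁻¹ • (A + B + C)

/-- `F` is the foot of the perpendicular from `P` to the line `XY`. -/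
def IsFoot (F P X Y : Pt) : Prop :=
  F ∈ line[ℝ, X, Y] ∧ inner ℝ (P - F) (Y - X) = (0 : ℝ)

/-- `H` is the orthocenter of the triangle `X Y Z` (it lies on the altitudes from
`X` and from `Y`; for a nondegenerate triangle this determines `H` uniquely). -/
def IsOrthocenter (H X Y Z : Pt) : Prop :=
  inner ℝ (H - X) (Y - Z) = (0 : ℝ) ∧ inner ℝ (H - Y) (Z - X) = (0 : ℝ)

/-- An affine subspace is a (genuine) line. -/
def IsLine (l : AffineSubspace ℝ Pt) : Prop :=
  ∃ p q : Pt, p ≠ q ∧ l = line[ℝ, p, q]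

/-- `Q` is the reflection of `P` across the line through `L₁`, `L₂`:
the midpoint of `P Q` lies on the line and `PQ` is perpendicular to it. -/
def IsReflectionInLine (P Q L₁ L₂ : Pt) : Prop :=
  midpoint ℝ P Q ∈ line[ℝ, L₁, L₂] ∧ inner ℝ (Q - P) (L₂ - L₁) = (0 : ℝ)

/-- `F` is the first Fermat point of triangle `ABC`: erecting equilateral triangles
`BCA''`, `CAB''`, `ABC''` externally on the sides, the lines `AA''`, `BB''`, `CC''`
pass through `F`. -/
def IsFirstFermatPoint (A B C F : Pt) : Prop :=
  ∃ A'' B'' C'' : Pt,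
    dist B A'' = dist B C ∧ dist C A'' = dist B C ∧
      (line[ℝ, B, C] : AffineSubspace ℝ Pt).SOppSide A'' A ∧
    dist C B'' = dist C A ∧ dist A B'' = dist C A ∧
      (line[ℝ, C, A] : AffineSubspace ℝ Pt).SOppSide B'' B ∧
    dist A C'' = dist A B ∧ dist B C'' = dist A B ∧
      (line[ℝ, A, B] : AffineSubspace ℝ Pt).SOppSide C'' C ∧
    F ∈ line[ℝ, A, A''] ∧ F ∈ line[ℝ, B, B''] ∧ F ∈ line[ℝ, C, C'']

/-- `F` is the second Fermat point of triangle `ABC`: the same construction with the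
equilateral triangles erected internally (on the same side as the triangle). -/
def IsSecondFermatPoint (A B C F : Pt) : Prop :=
  ∃ A'' B'' C'' : Pt,
    dist B A'' = dist B C ∧ dist C A'' = dist B C ∧
      (line[ℝ, B, C] : AffineSubspace ℝ Pt).SSameSide A'' A ∧
    dist C B'' = dist C A ∧ dist A B'' = dist C A ∧
      (line[ℝ, C, A] : AffineSubspace ℝ Pt).SSameSide B'' B ∧
    dist A C'' = dist A B ∧ dist B C'' = dist A B ∧
      (line[ℝ, A, B] : AffineSubspace ℝ Pt).SSameSide C'' C ∧
    F ∈ line[ℝ, A, A''] ∧ F ∈ line[ℝ, B, B''] ∧ F ∈ line[ℝ, C, C'']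

/-- `T` is the point where the `A`-excircle of triangle `A B C` touches side `BC`:
there is a circle centered on the opposite side of `BC` from `A`, tangent to the line
`BC` at `T ∈ [B, C]` and tangent to the lines `AB` and `AC`. -/
def IsExcircleTouchPoint (A B C T : Pt) : Prop :=
  ∃ (J : Pt) (r : ℝ), 0 < r ∧
    (line[ℝ, B, C] : AffineSubspace ℝ Pt).SOppSide J A ∧
    T ∈ segment ℝ B C ∧ dist J T = r ∧ inner ℝ (J - T) (C - B) = (0 : ℝ) ∧
    Metric.infDist J (line[ℝ, A, B] : Set Pt) = r ∧
    Metric.infDist J (line[ℝ, A, C] : Set Pt) = r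

/-- `A'` is the center of the equilateral triangle erected on `BC` externally
with respect to `A` (a vertex of the Napoleon triangle). -/
def IsNapoleonVertex (B C A A' : Pt) : Prop :=
  ∃ A'' : Pt, dist B A'' = dist B C ∧ dist C A'' = dist B C ∧
    (line[ℝ, B, C] : AffineSubspace ℝ Pt).SOppSide A'' A ∧
    A' = centroid3 B C A''

/-- The external homothety center of the circles with centers `O₁`, `O₂` and
radii `r₁ ≠ r₂`. -/
def extHomothetyCenter (O₁ O₂ : Pt) (r₁ r₂ : ℝ) : Pt :=
  (r₂ - r₁)⁻¹ • (r₂ • O₁ - r₁ • O₂)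

/-- Four lines in general position (no two parallel, no three concurrent), with the
six pairwise intersection points. -/
def GaussGeneralPosition (l₁ l₂ l₃ l₄ : AffineSubspace ℝ Pt)
    (P₁₂ P₁₃ P₁₄ P₂₃ P₂₄ P₃₄ : Pt) : Prop :=
  IsLine l₁ ∧ IsLine l₂ ∧ IsLine l₃ ∧ IsLine l₄ ∧
  (P₁₂ ∈ l₁ ∧ P₁₂ ∈ l₂ ∧ ∀ Q, Q ∈ l₁ → Q ∈ l₂ → Q = P₁₂) ∧
  (P₁₃ ∈ l₁ ∧ P₁₃ ∈ l₃ ∧ ∀ Q, Q ∈ l₁ → Q ∈ l₃ → Q = P₁₃) ∧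
  (P₁₄ ∈ l₁ ∧ P₁₄ ∈ l₄ ∧ ∀ Q, Q ∈ l₁ → Q ∈ l₄ → Q = P₁₄) ∧
  (P₂₃ ∈ l₂ ∧ P₂₃ ∈ l₃ ∧ ∀ Q, Q ∈ l₂ → Q ∈ l₃ → Q = P₂₃) ∧
  (P₂₄ ∈ l₂ ∧ P₂₄ ∈ l₄ ∧ ∀ Q, Q ∈ l₂ → Q ∈ l₄ → Q = P₂₄) ∧
  (P₃₄ ∈ l₃ ∧ P₃₄ ∈ l₄ ∧ ∀ Q, Q ∈ l₃ → Q ∈ l₄ → Q = P₃₄) ∧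
  P₁₂ ∉ l₃ ∧ P₁₂ ∉ l₄ ∧ P₁₃ ∉ l₄ ∧ P₂₃ ∉ l₄

/-- `g` is the Gauss line of the four lines `l₁, l₂, l₃, l₄` in general position:
the line through the midpoints of the three diagonals of the complete quadrilateral. -/
def IsGaussLine (l₁ l₂ l₃ l₄ g : AffineSubspace ℝ Pt) : Prop :=
  ∃ P₁₂ P₁₃ P₁₄ P₂₃ P₂₄ P₃₄ : Pt,
    GaussGeneralPosition l₁ l₂ l₃ l₄ P₁₂ P₁₃ P₁₄ P₂₃ P₂₄ P₃₄ ∧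
    IsLine g ∧ midpoint ℝ P₁₂ P₃₄ ∈ g ∧ midpoint ℝ P₁₃ P₂₄ ∈ g ∧
      midpoint ℝ P₁₄ P₂₃ ∈ g

/-- `s` is the Steiner line of the four lines `l₁, l₂, l₃, l₄` in general position:
the line through the orthocenters of the four triangles formed by triples of the lines. -/
def IsSteinerLine (l₁ l₂ l₃ l₄ s : AffineSubspace ℝ Pt) : Prop :=
  ∃ P₁₂ P₁₃ P₁₄ P₂₃ P₂₄ P₃₄ H₁₂₃ H₁₂₄ H₁₃₄ H₂₃₄ : Pt,
    GaussGeneralPosition l₁ l₂ l₃ l₄ P₁₂ P₁₃ P₁₄ P₂₃ P₂₄ P₃₄ ∧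
    IsOrthocenter H₁₂₃ P₁₂ P₁₃ P₂₃ ∧ IsOrthocenter H₁₂₄ P₁₂ P₁₄ P₂₄ ∧
    IsOrthocenter H₁₃₄ P₁₃ P₁₄ P₃₄ ∧ IsOrthocenter H₂₃₄ P₂₃ P₂₄ P₃₄ ∧
    IsLine s ∧ H₁₂₃ ∈ s ∧ H₁₂₄ ∈ s ∧ H₁₃₄ ∈ s ∧ H₂₃₄ ∈ s

/-- `e` is the Euler line of the (nondegenerate, non-equilateral) triangle `A B C`:
the line through its circumcenter and its centroid, which are distinct. -/
def IsEulerLine (A B C : Pt) (e : AffineSubspace ℝ Pt) : Prop :=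
  ∃ O : Pt, dist O A = dist O B ∧ dist O B = dist O C ∧ O ≠ centroid3 A B C ∧
    e = line[ℝ, O, centroid3 A B C]

/-- `s` is the Simson line of `P` with respect to triangle `A B C`: a line containing
the feet of the perpendiculars from `P` to the three side lines. -/
def IsSimsonLine (A B C P : Pt) (s : AffineSubspace ℝ Pt) : Prop :=
  IsLine s ∧ ∀ F : Pt, (IsFoot F P B C ∨ IsFoot F P C A ∨ IsFoot F P A B) → F ∈ s

/-!
All notions involved are affine, and an affine frame can be chosen in which `l₁, l₂, l₃` are
`y = 0`, `x = 0`, `x + y = 1` and `l₄` passes through `(a, 0)` and `(0, b)`. The common point is the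
centroid of the four points where the Gauss line `l` meets `l₁, l₂, l₃, l₄`: their parameters along
`l` are explicit rational functions of the frame data, and a direct computation puts the centroid
on the Gauss line of `l₁, l₂, l₃, l`. The configuration being symmetric in the four lines, this one
computation covers every `gᵢ`.
-/

open AffineMap

section Frame

-- `x • u + y • v + O` is the point with affine coordinates `(x, y)` in the frame `(O; u, v)`.
variable {V : Type*} [AddCommGroup V] [Module ℝ V] {O u v : V}

theorem lineMap_frame (x y x' y' t : ℝ) :
    lineMap (x • u + y • v + O) (x' • u + y' • v + O) t =
      (x + t * (x' - x)) • u + (y + t * (y' - y)) • v + O := by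
  rw [lineMap_apply_module']
  module

theorem midpoint_frame (x y x' y' : ℝ) :
    midpoint ℝ (x • u + y • v + O) (x' • u + y' • v + O) =
      ((x + x') / 2) • u + ((y + y') / 2) • v + O := by
  rw [midpoint_eq_smul_add, invOf_eq_inv]
  module

theorem frame_eq_frame_iff (huv : LinearIndependent ℝ ![u, v]) {x y x' y' : ℝ} :
    x • u + y • v + O = x' • u + y' • v + O ↔ x = x' ∧ y = y' :=
  ⟨fun h => huv.eq_of_pair (add_right_cancel h), by rintro ⟨rfl, rfl⟩; rfl⟩

theorem frame_mem_affineSpan_pair {x y x₁ y₁ x₂ y₂ : ℝ}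
    (hdet : (x - x₁) * (y₂ - y₁) = (y - y₁) * (x₂ - x₁)) (hne : ¬(x₁ = x₂ ∧ y₁ = y₂)) :
    x • u + y • v + O ∈ line[ℝ, x₁ • u + y₁ • v + O, x₂ • u + y₂ • v + O] := by
  rw [mem_affineSpan_pair_iff_exists_lineMap_eq]
  obtain ⟨s, hx, hy⟩ : ∃ s : ℝ, x = x₁ + s * (x₂ - x₁) ∧ y = y₁ + s * (y₂ - y₁) := by
    by_cases hx : x₁ = x₂
    · have hy : y₂ - y₁ ≠ 0 := sub_ne_zero.mpr fun h => hne ⟨hx, h.symm⟩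
      refine ⟨(y - y₁) / (y₂ - y₁), ?_, by field_simp; ring⟩
      subst hx
      simpa [hy, sub_eq_zero] using hdet
    · have hx : x₂ - x₁ ≠ 0 := sub_ne_zero.mpr (Ne.symm hx)
      refine ⟨(x - x₁) / (x₂ - x₁), by field_simp; ring, ?_⟩
      field_simp
      linear_combination -hdet
  exact ⟨s, by rw [lineMap_frame, hx, hy]⟩

end Frame

theorem IsLine.eq_affineSpan_pair {l : AffineSubspace ℝ Pt} (hl : IsLine l) {p q : Pt}
    (hp : p ∈ l) (hq : q ∈ l) (hpq : p ≠ q) : l = line[ℝ, p, q] := by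
  obtain ⟨_, _, -, rfl⟩ := hl
  exact (affineSpan_pair_eq_of_mem_of_mem_of_ne hp hq hpq).symm

theorem IsLine.frame_mem {g : AffineSubspace ℝ Pt} (hg : IsLine g) {O u v : Pt}
    (huv : LinearIndependent ℝ ![u, v]) {x y x₁ y₁ x₂ y₂ : ℝ}
    (h₁ : x₁ • u + y₁ • v + O ∈ g) (h₂ : x₂ • u + y₂ • v + O ∈ g)
    (hdet : (x - x₁) * (y₂ - y₁) = (y - y₁) * (x₂ - x₁)) (hne : ¬(x₁ = x₂ ∧ y₁ = y₂)) :
    x • u + y • v + O ∈ g := by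
  rw [hg.eq_affineSpan_pair h₁ h₂ (mt (frame_eq_frame_iff huv).mp hne)]
  exact frame_mem_affineSpan_pair hdet hne

namespace GaussGeneralPosition

variable {l₁ l₂ l₃ l₄ : AffineSubspace ℝ Pt} {P₁₂ P₁₃ P₁₄ P₂₃ P₂₄ P₃₄ : Pt}

theorem swap₁₂ (h : GaussGeneralPosition l₁ l₂ l₃ l₄ P₁₂ P₁₃ P₁₄ P₂₃ P₂₄ P₃₄) :
    GaussGeneralPosition l₂ l₁ l₃ l₄ P₁₂ P₂₃ P₂₄ P₁₃ P₁₄ P₃₄ := by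
  obtain ⟨h₁, h₂, h₃, h₄, ⟨h₁₂, h₁₂', u₁₂⟩, h₁₃, h₁₄, h₂₃, h₂₄, h₃₄, n₁₂₃, n₁₂₄, n₁₃₄, n₂₃₄⟩ := h
  exact ⟨h₂, h₁, h₃, h₄, ⟨h₁₂', h₁₂, fun Q hQ₂ hQ₁ => u₁₂ Q hQ₁ hQ₂⟩, h₂₃, h₂₄, h₁₃, h₁₄, h₃₄,
    n₁₂₃, n₁₂₄, n₂₃₄, n₁₃₄⟩

theorem swap₂₃ (h : GaussGeneralPosition l₁ l₂ l₃ l₄ P₁₂ P₁₃ P₁₄ P₂₃ P₂₄ P₃₄) :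
    GaussGeneralPosition l₁ l₃ l₂ l₄ P₁₃ P₁₂ P₁₄ P₂₃ P₃₄ P₂₄ := by
  obtain ⟨h₁, h₂, h₃, h₄, ⟨h₁₂, h₁₂', u₁₂⟩, ⟨h₁₃, h₁₃', u₁₃⟩, h₁₄, ⟨h₂₃, h₂₃', u₂₃⟩, h₂₄, h₃₄,
    n₁₂₃, n₁₂₄, n₁₃₄, n₂₃₄⟩ := h
  refine ⟨h₁, h₃, h₂, h₄, ⟨h₁₃, h₁₃', u₁₃⟩, ⟨h₁₂, h₁₂', u₁₂⟩, h₁₄,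
    ⟨h₂₃', h₂₃, fun Q hQ₃ hQ₂ => u₂₃ Q hQ₂ hQ₃⟩, h₃₄, h₂₄, fun h => n₁₂₃ ?_, n₁₃₄, n₁₂₄, n₂₃₄⟩
  rwa [← u₁₂ P₁₃ h₁₃ h]

theorem swap₃₄ (h : GaussGeneralPosition l₁ l₂ l₃ l₄ P₁₂ P₁₃ P₁₄ P₂₃ P₂₄ P₃₄) :
    GaussGeneralPosition l₁ l₂ l₄ l₃ P₁₂ P₁₄ P₁₃ P₂₄ P₂₃ P₃₄ := by
  obtain ⟨h₁, h₂, h₃, h₄, h₁₂, ⟨h₁₃, h₁₃', u₁₃⟩, ⟨h₁₄, h₁₄', u₁₄⟩, ⟨h₂₃, h₂₃', u₂₃⟩,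
    ⟨h₂₄, h₂₄', u₂₄⟩, ⟨h₃₄, h₃₄', u₃₄⟩, n₁₂₃, n₁₂₄, n₁₃₄, n₂₃₄⟩ := h
  refine ⟨h₁, h₂, h₄, h₃, h₁₂, ⟨h₁₄, h₁₄', u₁₄⟩, ⟨h₁₃, h₁₃', u₁₃⟩, ⟨h₂₄, h₂₄', u₂₄⟩,
    ⟨h₂₃, h₂₃', u₂₃⟩, ⟨h₃₄', h₃₄, fun Q hQ₄ hQ₃ => u₃₄ Q hQ₃ hQ₄⟩, n₁₂₄, n₁₂₃,
    fun h => n₁₃₄ ?_, fun h => n₂₃₄ ?_⟩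
  · rwa [← u₁₃ P₁₄ h₁₄ h]
  · rwa [← u₂₃ P₂₄ h₂₄ h]

theorem eq_affineSpan_pair (h : GaussGeneralPosition l₁ l₂ l₃ l₄ P₁₂ P₁₃ P₁₄ P₂₃ P₂₄ P₃₄) :
    l₁ = line[ℝ, P₁₂, P₁₃] ∧ l₂ = line[ℝ, P₁₂, P₂₃] ∧ l₃ = line[ℝ, P₁₃, P₂₃] ∧
      l₄ = line[ℝ, P₁₄, P₂₄] := by
  obtain ⟨h₁, h₂, h₃, h₄, ⟨h₁₂, h₁₂', u₁₂⟩, ⟨h₁₃, h₁₃', -⟩, ⟨h₁₄, h₁₄', -⟩, ⟨h₂₃, h₂₃', -⟩,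
    ⟨h₂₄, h₂₄', -⟩, -, n₁₂₃, n₁₂₄, -, -⟩ := h
  refine ⟨h₁.eq_affineSpan_pair h₁₂ h₁₃ ?_, h₂.eq_affineSpan_pair h₁₂' h₂₃ ?_,
    h₃.eq_affineSpan_pair h₁₃' h₂₃' ?_, h₄.eq_affineSpan_pair h₁₄' h₂₄' ?_⟩
  · rintro rfl; exact n₁₂₃ h₁₃'
  · rintro rfl; exact n₁₂₃ h₂₃'
  · rintro rfl; exact n₁₂₃ (u₁₂ P₁₃ h₁₃ h₂₃ ▸ h₁₃')
  · rintro rfl; exact n₁₂₄ (u₁₂ P₁₄ h₁₄ h₂₄ ▸ h₁₄')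

theorem exists_frame (h : GaussGeneralPosition l₁ l₂ l₃ l₄ P₁₂ P₁₃ P₁₄ P₂₃ P₂₄ P₃₄) :
    ∃ (O u v : Pt) (a b c : ℝ), LinearIndependent ℝ ![u, v] ∧
      P₁₂ = (0 : ℝ) • u + (0 : ℝ) • v + O ∧ P₁₃ = (1 : ℝ) • u + (0 : ℝ) • v + O ∧
      P₂₃ = (0 : ℝ) • u + (1 : ℝ) • v + O ∧ P₁₄ = a • u + (0 : ℝ) • v + O ∧
      P₂₄ = (0 : ℝ) • u + b • v + O ∧ P₃₄ = (1 - c) • u + c • v + O ∧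
      b ≠ 0 ∧ c ≠ 0 ∧ a * (b - c) = b * (1 - c) := by
  obtain ⟨rfl, rfl, rfl, rfl⟩ := h.eq_affineSpan_pair
  obtain ⟨-, -, -, -, ⟨-, -, u₁₂⟩, ⟨-, h₁₃, -⟩, ⟨h₁₄, h₁₄', -⟩, ⟨h₂₃, h₂₃', -⟩, ⟨h₂₄, h₂₄', -⟩,
    ⟨h₃₄, h₃₄', -⟩, n₁₂₃, n₁₂₄, n₁₃₄, -⟩ := h
  obtain ⟨O, u, v, rfl, rfl, rfl⟩ : ∃ O u v : Pt, P₁₂ = (0 : ℝ) • u + (0 : ℝ) • v + O ∧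
      P₁₃ = (1 : ℝ) • u + (0 : ℝ) • v + O ∧ P₂₃ = (0 : ℝ) • u + (1 : ℝ) • v + O :=
    ⟨P₁₂, P₁₃ - P₁₂, P₂₃ - P₁₂, by module, by module, by module⟩
  have hu : u ≠ 0 := by
    rintro rfl
    exact n₁₂₃ (by simpa using h₁₃)
  have huv : LinearIndependent ℝ ![u, v] := by
    refine (LinearIndependent.pair_iff' hu).mpr fun r hr => n₁₂₃ ?_
    have h₂₃₁ : (0 : ℝ) • u + (1 : ℝ) • v + O ∈ line[ℝ, (0 : ℝ) • u + (0 : ℝ) • v + O,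
        (1 : ℝ) • u + (0 : ℝ) • v + O] := by
      rw [mem_affineSpan_pair_iff_exists_lineMap_eq]
      exact ⟨r, by rw [lineMap_frame, ← hr]; module⟩
    rwa [← u₁₂ _ h₂₃₁ h₂₃]
  obtain ⟨a, rfl⟩ := mem_affineSpan_pair_iff_exists_lineMap_eq.mp h₁₄
  obtain ⟨b, rfl⟩ := mem_affineSpan_pair_iff_exists_lineMap_eq.mp h₂₄
  obtain ⟨c, rfl⟩ := mem_affineSpan_pair_iff_exists_lineMap_eq.mp h₃₄
  obtain ⟨e, he⟩ := mem_affineSpan_pair_iff_exists_lineMap_eq.mp h₃₄'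
  simp only [lineMap_frame] at he h₃₄' n₁₂₄ n₁₃₄ ⊢
  obtain ⟨ex, ey⟩ := (frame_eq_frame_iff huv).mp he
  refine ⟨O, u, v, a, b, c, huv, rfl, rfl, rfl, by simp, by simp, by module, ?_, ?_, ?_⟩
  · rintro rfl
    exact n₁₂₄ (by simpa using right_mem_affineSpan_pair ℝ _ _)
  · rintro rfl
    exact n₁₃₄ (by simpa using h₃₄')
  · linear_combination b * ex + a * ey

theorem midpoint_midpoint_mem {l g : AffineSubspace ℝ Pt} {Q₁ Q₂ Q₃ Q₄ : Pt}
    (h : GaussGeneralPosition l₁ l₂ l₃ l₄ P₁₂ P₁₃ P₁₄ P₂₃ P₂₄ P₃₄)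
    (hl : IsLine l) (hM₁ : midpoint ℝ P₁₂ P₃₄ ∈ l) (hM₂ : midpoint ℝ P₁₃ P₂₄ ∈ l)
    (hQ₁ : Q₁ ∈ l₁) (hQ₁l : Q₁ ∈ l) (hQ₂ : Q₂ ∈ l₂) (hQ₂l : Q₂ ∈ l)
    (hQ₃ : Q₃ ∈ l₃) (hQ₃l : Q₃ ∈ l) (hQ₄ : Q₄ ∈ l₄) (hQ₄l : Q₄ ∈ l)
    (hg : IsLine g) (hN₁ : midpoint ℝ P₁₂ Q₃ ∈ g) (hN₂ : midpoint ℝ P₁₃ Q₂ ∈ g) :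
    midpoint ℝ (midpoint ℝ Q₁ Q₂) (midpoint ℝ Q₃ Q₄) ∈ g := by
  obtain ⟨rfl, rfl, rfl, rfl⟩ := h.eq_affineSpan_pair
  obtain ⟨O, u, v, a, b, c, huv, rfl, rfl, rfl, rfl, rfl, rfl, hb, hc, hrel⟩ := h.exists_frame
  simp only [midpoint_frame] at hM₁ hM₂
  obtain rfl := hl.eq_affineSpan_pair hM₁ hM₂
    fun h => hc (by linarith [((frame_eq_frame_iff huv).mp h).1])
  obtain ⟨t₁, rfl⟩ := mem_affineSpan_pair_iff_exists_lineMap_eq.mp hQ₁l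
  obtain ⟨t₂, rfl⟩ := mem_affineSpan_pair_iff_exists_lineMap_eq.mp hQ₂l
  obtain ⟨t₃, rfl⟩ := mem_affineSpan_pair_iff_exists_lineMap_eq.mp hQ₃l
  obtain ⟨t₄, rfl⟩ := mem_affineSpan_pair_iff_exists_lineMap_eq.mp hQ₄l
  simp only [mem_affineSpan_pair_iff_exists_lineMap_eq, lineMap_frame, frame_eq_frame_iff huv]
    at hQ₁ hQ₂ hQ₃ hQ₄
  obtain ⟨_, -, e₁⟩ := hQ₁
  obtain ⟨_, e₂, -⟩ := hQ₂
  obtain ⟨_, e₃x, e₃y⟩ := hQ₃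
  obtain ⟨_, e₄x, e₄y⟩ := hQ₄
  simp only [lineMap_frame, midpoint_frame] at hN₁ hN₂ ⊢
  have hbc : b - c ≠ 0 := fun h => hc (by linear_combination -2 * e₁ - t₁ * h)
  have ht₁ : t₁ = -c / (b - c) := eq_div_of_mul_eq hbc (by linear_combination -2 * e₁)
  have ht₂ : t₂ = (c - 1) / c := eq_div_of_mul_eq hc (by linear_combination -2 * e₂)
  have ht₃ : t₃ = 1 / b := eq_div_of_mul_eq hb (by linear_combination -2 * e₃x - 2 * e₃y)
  have ht₄ : t₄ = a := mul_left_cancel₀ hb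
    (by linear_combination (-2) * (b * e₄x + a * e₄y) - (t₄ - 1) * hrel)
  have ha : a = b * (1 - c) / (b - c) := eq_div_of_mul_eq hbc hrel
  refine hg.frame_mem huv hN₁ hN₂ ?_ ?_
  · rw [ht₁, ht₂, ht₃, ht₄, ha]
    field_simp
    ring
  · rintro ⟨hx, hy⟩
    have ht : t₃ = t₂ := by
      have : (t₃ - t₂) * (b - c) = 0 := by linear_combination 4 * hy
      exact sub_eq_zero.mp ((mul_eq_zero.mp this).resolve_right hbc)
    rw [ht] at hx
    linarith

end GaussGeneralPosition

namespace IsGaussLine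

variable {l₁ l₂ l₃ l₄ g : AffineSubspace ℝ Pt}

theorem swap₁₂ (h : IsGaussLine l₁ l₂ l₃ l₄ g) : IsGaussLine l₂ l₁ l₃ l₄ g := by
  obtain ⟨_, _, _, _, _, _, hgp, hg, h₁, h₂, h₃⟩ := h
  refine ⟨_, _, _, _, _, _, hgp.swap₁₂, hg, h₁, ?_, ?_⟩ <;> rwa [midpoint_comm]

theorem swap₂₃ (h : IsGaussLine l₁ l₂ l₃ l₄ g) : IsGaussLine l₁ l₃ l₂ l₄ g := by
  obtain ⟨_, _, _, _, _, _, hgp, hg, h₁, h₂, h₃⟩ := h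
  exact ⟨_, _, _, _, _, _, hgp.swap₂₃, hg, h₂, h₁, h₃⟩

theorem swap₃₄ (h : IsGaussLine l₁ l₂ l₃ l₄ g) : IsGaussLine l₁ l₂ l₄ l₃ g := by
  obtain ⟨_, _, _, _, _, _, hgp, hg, h₁, h₂, h₃⟩ := h
  exact ⟨_, _, _, _, _, _, hgp.swap₃₄, hg, h₁, h₃, h₂⟩

theorem midpoint_midpoint_mem {l : AffineSubspace ℝ Pt} {Q₁ Q₂ Q₃ Q₄ : Pt}
    (hl : IsGaussLine l₁ l₂ l₃ l₄ l) (hg : IsGaussLine l₁ l₂ l₃ l g)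
    (hQ₁ : Q₁ ∈ l₁) (hQ₁l : Q₁ ∈ l) (hQ₂ : Q₂ ∈ l₂) (hQ₂l : Q₂ ∈ l)
    (hQ₃ : Q₃ ∈ l₃) (hQ₃l : Q₃ ∈ l) (hQ₄ : Q₄ ∈ l₄) (hQ₄l : Q₄ ∈ l) :
    midpoint ℝ (midpoint ℝ Q₁ Q₂) (midpoint ℝ Q₃ Q₄) ∈ g := by
  obtain ⟨P₁₂, P₁₃, P₁₄, P₂₃, P₂₄, P₃₄, hgp, hl, hM₁, hM₂, -⟩ := hl
  obtain ⟨R₁₂, R₁₃, -, -, R₂₄, R₃₄, ⟨-, -, -, -, ⟨r₁₂, r₁₂', -⟩, ⟨r₁₃, r₁₃', -⟩, -, -,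
    ⟨-, -, u₂₄⟩, ⟨-, -, u₃₄⟩, -⟩, hg, hN₁, hN₂, -⟩ := hg
  obtain ⟨-, -, -, -, ⟨-, -, u₁₂⟩, ⟨-, -, u₁₃⟩, -⟩ := id hgp
  obtain rfl := u₁₂ R₁₂ r₁₂ r₁₂'
  obtain rfl := u₁₃ R₁₃ r₁₃ r₁₃'
  obtain rfl := u₂₄ Q₂ hQ₂ hQ₂l
  obtain rfl := u₃₄ Q₃ hQ₃ hQ₃l
  exact hgp.midpoint_midpoint_mem hl hM₁ hM₂ hQ₁ hQ₁l hQ₂ hQ₂l hQ₃ hQ₃l hQ₄ hQ₄l hg hN₁ hN₂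

end IsGaussLine

/-- **Theorem 11.1 (Gauss lines).** With `l` the Gauss line of `l₁, l₂, l₃, l₄` and
`g_i` the Gauss line of the four lines obtained by replacing `l_i` with `l`:
the lines `l`, `g₁`, `g₂`, `g₃`, `g₄` are concurrent. -/
theorem gauss_lines_concurrent
    (l₁ l₂ l₃ l₄ l g₁ g₂ g₃ g₄ : AffineSubspace ℝ Pt)
    (hl : IsGaussLine l₁ l₂ l₃ l₄ l)
    (h₁ : IsGaussLine l l₂ l₃ l₄ g₁)
    (h₂ : IsGaussLine l₁ l l₃ l₄ g₂)
    (h₃ : IsGaussLine l₁ l₂ l l₄ g₃)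
    (h₄ : IsGaussLine l₁ l₂ l₃ l g₄) :
    ∃ P : Pt, P ∈ l ∧ P ∈ g₁ ∧ P ∈ g₂ ∧ P ∈ g₃ ∧ P ∈ g₄ := by
  obtain ⟨-, -, Q₁, -, Q₂, Q₃, ⟨-, -, -, -, -, -, ⟨hQ₁, hQ₁l, -⟩, -, ⟨hQ₂, hQ₂l, -⟩,
    ⟨hQ₃, hQ₃l, -⟩, -⟩, -⟩ := id h₄
  obtain ⟨-, -, -, -, -, Q₄, ⟨-, -, -, -, -, -, -, -, -, ⟨hQ₄l, hQ₄, -⟩, -⟩, -⟩ := id h₃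
  refine ⟨midpoint ℝ (midpoint ℝ Q₁ Q₂) (midpoint ℝ Q₃ Q₄),
    lineMap_mem _ (lineMap_mem _ hQ₁l hQ₂l) (lineMap_mem _ hQ₃l hQ₄l), ?_, ?_, ?_,
    hl.midpoint_midpoint_mem h₄ hQ₁ hQ₁l hQ₂ hQ₂l hQ₃ hQ₃l hQ₄ hQ₄l⟩
  · convert hl.swap₁₂.swap₂₃.swap₃₄.midpoint_midpoint_mem h₁.swap₁₂.swap₂₃.swap₃₄
      hQ₂ hQ₂l hQ₃ hQ₃l hQ₄ hQ₄l hQ₁ hQ₁l using 1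
    simp only [midpoint_eq_smul_add]; module
  · convert hl.swap₂₃.swap₃₄.midpoint_midpoint_mem h₂.swap₂₃.swap₃₄
      hQ₁ hQ₁l hQ₃ hQ₃l hQ₄ hQ₄l hQ₂ hQ₂l using 1
    simp only [midpoint_eq_smul_add]; module
  · convert hl.swap₃₄.midpoint_midpoint_mem h₃.swap₃₄ hQ₁ hQ₁l hQ₂ hQ₂l hQ₄ hQ₄l hQ₃ hQ₃l using 2
    exact midpoint_comm _ _
end
end

section
/- Let ABC be a nondegenerate triangle with circumcircle Γ, and let P be a point on Γ (distinct from A, B, C). Suppose the Simson line of P with respect to ABC meets Γ in two distinct points Q and R (both distinct from A, B, C). Let N be the intersection point of the Simson line of Q and the Simson line of R with respect to ABC (assume these two lines meet in a unique point). Then the midpoint of segment PN lies on the line QR (i.e., on the Simson line of P). -/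
open EuclideanGeometry RealInnerProductSpace AffineSubspace

noncomputable section

/-! In complex coordinates centred at the circumcentre, with `s` the squared circumradius and
`σ₁, σ₂, σ₃` the elementary symmetric functions of `a, b, c`, the Simson line of `p` is the real
line `2 s p² z - 2 σ₃ p z̄ = s (p³ + σ₁ p² - σ₂ p - σ₃)`. It passes through the midpoint of `p`
and the orthocentre `σ₁`. If two distinct points `q`, `r` of the circle lie on it, then
`p q r = -σ₃`, which makes the Simson lines of `q` and `r` meet at `n = (q + r + σ₁ - p) / 2`.
Hence the midpoint of `p n` is the midpoint of the midpoints of `q r` and of `p σ₁`, both on the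
Simson line of `p`. -/

open Complex ComplexConjugate

section ComplexPlane

variable {s : ℝ} {a b c p q r x y z w n : ℂ}

theorem mem_affineSpan_pair_iff_mul_conj_eq (hxy : x ≠ y) :
    z ∈ line[ℝ, x, y] ↔ (z - x) * conj (y - x) = conj (z - x) * (y - x) := by
  have hw : y - x ≠ 0 := sub_ne_zero.mpr hxy.symm
  rw [mem_affineSpan_pair_iff_exists_lineMap_eq]
  constructor
  · rintro ⟨t, rfl⟩
    simp only [AffineMap.lineMap_apply_module', add_sub_cancel_right, real_smul, map_mul,
      conj_ofReal]
    ring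
  · intro h
    have hreal : conj ((z - x) / (y - x)) = (z - x) / (y - x) := by
      rw [map_div₀, div_eq_div_iff ((map_ne_zero _).mpr hw) hw]
      exact h.symm
    refine ⟨((z - x) / (y - x)).re, ?_⟩
    rw [AffineMap.lineMap_apply_module', real_smul, conj_eq_iff_re.mp hreal]
    field_simp
    ring

theorem conj_eq_div_of_mul_conj_eq (hs : s ≠ 0) (hx : x * conj x = s) :
    conj x = s / x ∧ x ≠ 0 := by
  have hx0 : x ≠ 0 := by
    rintro rfl
    exact hs (by simpa using hx.symm)
  exact ⟨by rw [eq_div_iff hx0, mul_comm, hx], hx0⟩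

/-- The foot of the perpendicular from `z` to the chord `xy` of the circle `|w|² = s`. -/
def chordFoot (s : ℝ) (x y z : ℂ) : ℂ := (x + y + z - x * y * conj z / s) / 2

theorem chordFoot_mem_affineSpan_pair (hs : s ≠ 0) (hx : x * conj x = s) (hy : y * conj y = s)
    (hxy : x ≠ y) : chordFoot s x y z ∈ line[ℝ, x, y] := by
  obtain ⟨hx', hx0⟩ := conj_eq_div_of_mul_conj_eq hs hx
  obtain ⟨hy', hy0⟩ := conj_eq_div_of_mul_conj_eq hs hy
  have hs' : (s : ℂ) ≠ 0 := by exact_mod_cast hs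
  rw [mem_affineSpan_pair_iff_mul_conj_eq hxy]
  simp only [chordFoot, map_sub, map_add, map_mul, map_div₀, conj_conj, conj_ofReal, map_ofNat,
    hx', hy']
  field_simp
  ring

theorem inner_sub_chordFoot (hs : s ≠ 0) (hx : x * conj x = s) (hy : y * conj y = s) :
    ⟪z - chordFoot s x y z, y - x⟫ = 0 := by
  obtain ⟨hx', hx0⟩ := conj_eq_div_of_mul_conj_eq hs hx
  obtain ⟨hy', hy0⟩ := conj_eq_div_of_mul_conj_eq hs hy
  have hs' : (s : ℂ) ≠ 0 := by exact_mod_cast hs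
  have h : (y - x) * conj (z - chordFoot s x y z) + conj ((y - x) * conj (z - chordFoot s x y z))
      = 0 := by
    simp only [chordFoot, map_sub, map_add, map_mul, map_div₀, conj_conj, conj_ofReal, map_ofNat,
      hx', hy']
    field_simp
    ring
  rw [add_conj, ofReal_eq_zero] at h
  rw [Complex.inner]
  exact (mul_eq_zero.mp h).resolve_left two_ne_zero

theorem chordFoot_sub_chordFoot (hs : s ≠ 0) (hp : p * conj p = s) :
    chordFoot s a b p - chordFoot s c a p = (b - c) * (p - a) / (2 * p) := by
  obtain ⟨hp', hp0⟩ := conj_eq_div_of_mul_conj_eq hs hp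
  have hs' : (s : ℂ) ≠ 0 := by exact_mod_cast hs
  rw [chordFoot, chordFoot, hp']
  field_simp
  ring

/-- The Simson line of `p` with respect to the triangle `a b c` inscribed in the circle
`|w|² = s`. -/
def OnSimsonLine (s : ℝ) (a b c p z : ℂ) : Prop :=
  2 * s * p ^ 2 * z - 2 * (a * b * c) * p * conj z =
    s * (p ^ 3 + (a + b + c) * p ^ 2 - (a * b + b * c + c * a) * p - a * b * c)

theorem onSimsonLine_rotate : OnSimsonLine s b c a p z ↔ OnSimsonLine s a b c p z := by
  unfold OnSimsonLine
  constructor <;> intro h <;> linear_combination h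

theorem mem_affineSpan_chordFoot_iff_onSimsonLine (hs : s ≠ 0) (ha : a * conj a = s)
    (hb : b * conj b = s) (hc : c * conj c = s) (hp : p * conj p = s) (hbc : b ≠ c)
    (hpa : p ≠ a) :
    z ∈ line[ℝ, chordFoot s c a p, chordFoot s a b p] ↔ OnSimsonLine s a b c p z := by
  obtain ⟨ha', ha0⟩ := conj_eq_div_of_mul_conj_eq hs ha
  obtain ⟨hb', hb0⟩ := conj_eq_div_of_mul_conj_eq hs hb
  obtain ⟨hc', hc0⟩ := conj_eq_div_of_mul_conj_eq hs hc
  obtain ⟨hp', hp0⟩ := conj_eq_div_of_mul_conj_eq hs hp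
  have hs' : (s : ℂ) ≠ 0 := by exact_mod_cast hs
  have hfeet : chordFoot s a b p - chordFoot s c a p ≠ 0 := by
    rw [chordFoot_sub_chordFoot hs hp]
    exact div_ne_zero (mul_ne_zero (sub_ne_zero.mpr hbc) (sub_ne_zero.mpr hpa))
      (mul_ne_zero two_ne_zero hp0)
  have key : (z - chordFoot s c a p) * conj (chordFoot s a b p - chordFoot s c a p)
        - conj (z - chordFoot s c a p) * (chordFoot s a b p - chordFoot s c a p)
      = (b - c) * (p - a) / (4 * a * b * c * p ^ 2) *
        (2 * s * p ^ 2 * z - 2 * (a * b * c) * p * conj z -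
          s * (p ^ 3 + (a + b + c) * p ^ 2 - (a * b + b * c + c * a) * p - a * b * c)) := by
    rw [chordFoot_sub_chordFoot hs hp]
    simp only [chordFoot, map_sub, map_add, map_mul, map_div₀, conj_ofReal, map_ofNat,
      ha', hb', hc', hp']
    field_simp
    ring
  rw [mem_affineSpan_pair_iff_mul_conj_eq (sub_ne_zero.mp hfeet).symm, OnSimsonLine,
    ← sub_eq_zero, key, ← sub_eq_zero (a := 2 * s * p ^ 2 * z - _)]
  simp [sub_ne_zero.mpr hbc, sub_ne_zero.mpr hpa, ha0, hb0, hc0, hp0]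

theorem OnSimsonLine.midpoint (hz : OnSimsonLine s a b c p z) (hw : OnSimsonLine s a b c p w) :
    OnSimsonLine s a b c p ((z + w) / 2) := by
  unfold OnSimsonLine at *
  simp only [map_div₀, map_add, map_ofNat]
  linear_combination (hz + hw) / 2

/-- `a + b + c` is the orthocentre of the triangle `a b c`. -/
theorem onSimsonLine_midpoint_orthocenter (hs : s ≠ 0) (ha : a * conj a = s)
    (hb : b * conj b = s) (hc : c * conj c = s) (hp : p * conj p = s) :
    OnSimsonLine s a b c p ((p + (a + b + c)) / 2) := by
  obtain ⟨ha', ha0⟩ := conj_eq_div_of_mul_conj_eq hs ha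
  obtain ⟨hb', hb0⟩ := conj_eq_div_of_mul_conj_eq hs hb
  obtain ⟨hc', hc0⟩ := conj_eq_div_of_mul_conj_eq hs hc
  obtain ⟨hp', hp0⟩ := conj_eq_div_of_mul_conj_eq hs hp
  unfold OnSimsonLine
  simp only [map_div₀, map_add, map_ofNat, ha', hb', hc', hp']
  field_simp
  ring

theorem OnSimsonLine.mul_mul_eq_neg (hq : q * conj q = s) (hr : r * conj r = s) (hs : s ≠ 0)
    (hp : p ≠ 0) (hqr : q ≠ r)
    (hPq : OnSimsonLine s a b c p q) (hPr : OnSimsonLine s a b c p r) :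
    p * q * r = -(a * b * c) := by
  have h : (2 * s * p * (q - r)) * (p * q * r + a * b * c) = 0 := by
    unfold OnSimsonLine at hPq hPr
    linear_combination q * r * hPq - q * r * hPr + 2 * (a * b * c) * p * r * hq
      - 2 * (a * b * c) * p * q * hr
  have hs' : (s : ℂ) ≠ 0 := by exact_mod_cast hs
  linear_combination (mul_eq_zero.mp h).resolve_left
    (mul_ne_zero (mul_ne_zero (mul_ne_zero two_ne_zero hs') hp) (sub_ne_zero.mpr hqr))

theorem two_mul_eq_of_onSimsonLine (hs : s ≠ 0) (hq : q ≠ 0) (hr : r ≠ 0) (hqr : q ≠ r)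
    (hpqr : p * q * r = -(a * b * c))
    (hQn : OnSimsonLine s a b c q n) (hRn : OnSimsonLine s a b c r n) :
    2 * n = q + r + (a + b + c) - p := by
  have h : (s * q * r * (q - r)) * (2 * n - (q + r + (a + b + c) - p)) = 0 := by
    unfold OnSimsonLine at hQn hRn
    linear_combination r * hQn - q * hRn + s * (q - r) * hpqr
  have hs' : (s : ℂ) ≠ 0 := by exact_mod_cast hs
  linear_combination (mul_eq_zero.mp h).resolve_left
    (mul_ne_zero (mul_ne_zero (mul_ne_zero hs' hq) hr) (sub_ne_zero.mpr hqr))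

end ComplexPlane

theorem AffineEquiv.apply_mem_affineSpan_pair_iff {k V₁ P₁ V₂ P₂ : Type*} [Ring k]
    [AddCommGroup V₁] [Module k V₁] [AddTorsor V₁ P₁] [AddCommGroup V₂] [Module k V₂]
    [AddTorsor V₂ P₂] (e : P₁ ≃ᵃ[k] P₂) {x y z : P₁} :
    e z ∈ line[k, e x, e y] ↔ z ∈ line[k, x, y] := by
  simp only [mem_affineSpan_pair_iff_exists_lineMap_eq, ← e.apply_lineMap, e.apply_eq_iff_eq]

theorem exists_affineIsometryEquiv_complex (O : Pt) : ∃ e : Pt ≃ᵃⁱ[ℝ] ℂ, e O = 0 :=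
  ⟨(AffineIsometryEquiv.vaddConst ℝ O).symm.trans
    Complex.orthonormalBasisOneI.repr.symm.toAffineIsometryEquiv, by simp⟩

section Transfer

variable (e : Pt ≃ᵃⁱ[ℝ] ℂ) {s : ℝ}

theorem mul_conj_eq_of_dist_eq {O X : Pt} {rad : ℝ} (he : e O = 0) (h : dist O X = rad) :
    e X * conj (e X) = (rad ^ 2 : ℝ) := by
  rw [mul_conj, normSq_eq_norm_sq, ← h, dist_comm, ← e.dist_map, he, dist_zero_right]

theorem isFoot_symm_chordFoot (hs : s ≠ 0) {X Y : Pt} (P : Pt) (hX : e X * conj (e X) = s)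
    (hY : e Y * conj (e Y) = s) (hXY : X ≠ Y) :
    IsFoot (e.symm (chordFoot s (e X) (e Y) (e P))) P X Y := by
  constructor
  · rw [← e.toAffineEquiv.apply_mem_affineSpan_pair_iff]
    simpa using chordFoot_mem_affineSpan_pair hs hX hY (e.injective.ne hXY)
  · have h := inner_sub_chordFoot (z := e P) hs hX hY
    rwa [← e.apply_symm_apply (chordFoot s (e X) (e Y) (e P)), ← vsub_eq_sub, ← vsub_eq_sub,
      ← e.map_vsub, ← e.map_vsub, LinearIsometryEquiv.inner_map_map] at h

theorem IsSimsonLine.rotate {A B C P : Pt} {l : AffineSubspace ℝ Pt}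
    (hl : IsSimsonLine A B C P l) : IsSimsonLine B C A P l :=
  ⟨hl.1, fun F hF => hl.2 F (by tauto)⟩

theorem IsSimsonLine.mem_iff_of_ne {A B C P : Pt} {l : AffineSubspace ℝ Pt}
    (hl : IsSimsonLine A B C P l) (hs : s ≠ 0) (hA : e A * conj (e A) = s)
    (hB : e B * conj (e B) = s) (hC : e C * conj (e C) = s) (hP : e P * conj (e P) = s)
    (hAB : A ≠ B) (hBC : B ≠ C) (hCA : C ≠ A) (hPA : P ≠ A) (Z : Pt) :
    Z ∈ l ↔ OnSimsonLine s (e A) (e B) (e C) (e P) (e Z) := by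
  have hF₁ := hl.2 _ (Or.inr (Or.inl (isFoot_symm_chordFoot e hs P hC hA hCA)))
  have hF₂ := hl.2 _ (Or.inr (Or.inr (isFoot_symm_chordFoot e hs P hA hB hAB)))
  have hne : chordFoot s (e C) (e A) (e P) ≠ chordFoot s (e A) (e B) (e P) := by
    rw [ne_comm, ← sub_ne_zero, chordFoot_sub_chordFoot hs hP]
    exact div_ne_zero (mul_ne_zero (sub_ne_zero.mpr (e.injective.ne hBC))
      (sub_ne_zero.mpr (e.injective.ne hPA)))
      (mul_ne_zero two_ne_zero (conj_eq_div_of_mul_conj_eq hs hP).2)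
  obtain ⟨U, V, -, rfl⟩ := hl.1
  rw [← affineSpan_pair_eq_of_mem_of_mem_of_ne hF₁ hF₂ (e.symm.injective.ne hne),
    ← e.toAffineEquiv.apply_mem_affineSpan_pair_iff]
  simpa using mem_affineSpan_chordFoot_iff_onSimsonLine hs hA hB hC hP
    (e.injective.ne hBC) (e.injective.ne hPA)

theorem IsSimsonLine.mem_iff {A B C P : Pt} {l : AffineSubspace ℝ Pt}
    (hl : IsSimsonLine A B C P l) (hs : s ≠ 0) (hA : e A * conj (e A) = s)
    (hB : e B * conj (e B) = s) (hC : e C * conj (e C) = s) (hP : e P * conj (e P) = s)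
    (hAB : A ≠ B) (hBC : B ≠ C) (hCA : C ≠ A) (Z : Pt) :
    Z ∈ l ↔ OnSimsonLine s (e A) (e B) (e C) (e P) (e Z) := by
  by_cases hPA : P = A
  -- the feet on `CA` and `AB` coincide only when `P = A`; then use those on `AB` and `BC`
  · rw [← onSimsonLine_rotate]
    exact hl.rotate.mem_iff_of_ne e hs hB hC hA hP hBC hCA hAB (hPA ▸ hAB) Z
  · exact hl.mem_iff_of_ne e hs hA hB hC hP hAB hBC hCA hPA Z

end Transfer

theorem simson_lines_midpoint_general
    (A B C P Q R N O : Pt) (rad : ℝ)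
    (sP sQ sR : AffineSubspace ℝ Pt)
    (hABC : ¬ Collinear ℝ ({A, B, C} : Set Pt))
    (hO : dist O A = rad ∧ dist O B = rad ∧ dist O C = rad)
    (hP : dist O P = rad)
    (hsP : IsSimsonLine A B C P sP)
    (hQ : dist O Q = rad) (hQmem : Q ∈ sP)
    (hR : dist O R = rad) (hRmem : R ∈ sP)
    (hQR : Q ≠ R)
    (hsQ : IsSimsonLine A B C Q sQ)
    (hsR : IsSimsonLine A B C R sR)
    (hN : N ∈ sQ ∧ N ∈ sR) :
    midpoint ℝ P N ∈ sP := by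
  obtain ⟨hOA, hOB, hOC⟩ := hO
  have hAB := ne₁₂_of_not_collinear hABC
  have hBC := ne₂₃_of_not_collinear hABC
  have hCA := (ne₁₃_of_not_collinear hABC).symm
  have hs : rad ^ 2 ≠ 0 := by
    refine pow_ne_zero 2 fun h => hAB ?_
    rw [h, dist_eq_zero] at hOA hOB
    rw [← hOA, hOB]
  obtain ⟨e, he⟩ := exists_affineIsometryEquiv_complex O
  have onCircle {X : Pt} (hX : dist O X = rad) := mul_conj_eq_of_dist_eq e he hX
  have simson {X : Pt} {l : AffineSubspace ℝ Pt} (hX : dist O X = rad)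
      (hl : IsSimsonLine A B C X l) :=
    hl.mem_iff e hs (onCircle hOA) (onCircle hOB) (onCircle hOC) (onCircle hX) hAB hBC hCA
  have hne0 {X : Pt} (hX : dist O X = rad) : e X ≠ 0 :=
    (conj_eq_div_of_mul_conj_eq hs (onCircle hX)).2
  have hpqr := OnSimsonLine.mul_mul_eq_neg (onCircle hQ) (onCircle hR) hs (hne0 hP)
    (e.injective.ne hQR) ((simson hP hsP Q).1 hQmem) ((simson hP hsP R).1 hRmem)
  have hn := two_mul_eq_of_onSimsonLine hs (hne0 hQ) (hne0 hR) (e.injective.ne hQR) hpqr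
    ((simson hQ hsQ N).1 hN.1) ((simson hR hsR N).1 hN.2)
  have hmid : e (midpoint ℝ P N)
      = ((e Q + e R) / 2 + (e P + (e A + e B + e C)) / 2) / 2 := by
    rw [show e (midpoint ℝ P N) = midpoint ℝ (e P) (e N) from e.toAffineEquiv.map_midpoint P N,
      midpoint_eq_smul_add, invOf_eq_inv, real_smul]
    push_cast
    linear_combination hn / 4
  rw [simson hP hsP, hmid]
  exact ((simson hP hsP Q).1 hQmem).midpoint ((simson hP hsP R).1 hRmem) |>.midpoint
    (onSimsonLine_midpoint_orthocenter hs (onCircle hOA) (onCircle hOB) (onCircle hOC)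
      (onCircle hP))

/-- **Theorem 11.4 (Simson lines).** Let the Simson line of `P` with respect to `ABC`
meet the circumcircle at `Q`, `R`, and let `N` be the intersection of the Simson
lines of `Q` and `R`. Then the midpoint of `PN` lies on the Simson line of `P`. -/
theorem simson_lines_midpoint
    (A B C P Q R N O : Pt) (rad : ℝ)
    (sP sQ sR : AffineSubspace ℝ Pt)
    (hABC : ¬ Collinear ℝ ({A, B, C} : Set Pt))
    (hO : dist O A = rad ∧ dist O B = rad ∧ dist O C = rad)
    (hP : dist O P = rad) (hPA : P ≠ A) (hPB : P ≠ B) (hPC : P ≠ C)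
    (hsP : IsSimsonLine A B C P sP)
    (hQ : dist O Q = rad) (hQmem : Q ∈ sP)
    (hR : dist O R = rad) (hRmem : R ∈ sP)
    (hQR : Q ≠ R)
    (hQA : Q ≠ A) (hQB : Q ≠ B) (hQC : Q ≠ C)
    (hRA : R ≠ A) (hRB : R ≠ B) (hRC : R ≠ C)
    (hsQ : IsSimsonLine A B C Q sQ)
    (hsR : IsSimsonLine A B C R sR)
    (hN : N ∈ sQ ∧ N ∈ sR)
    (hNuniq : ∀ Z : Pt, Z ∈ sQ → Z ∈ sR → Z = N) :
    midpoint ℝ P N ∈ sP :=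
  simson_lines_midpoint_general A B C P Q R N O rad sP sQ sR hABC hO hP hsP hQ hQmem hR hRmem hQR
    hsQ hsR hN
end
end
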